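/- arXiv:1303.2416 — 5 statements merged into one kernel-verified Lean document; each statement's English description precedes it below -/
import Mathlib

section
/- For positive integers n and d, if A and B are disjoint subsets of Z^d each of size n, then there exist points p in A and q in B such that the Chebyshev (L-infinity) distance between p and q is at least ⌈(1/2)⌈(2n)^(1/d)⌉⌉ - 1. -/
/-!
Let `K` be the largest Chebyshev distance between a point of `A` and a point of `B`. Any two
points of `A ∪ B` are within `2K` of each other, going through a point of the other set, so the
`2n` points of `A ∪ B` lie in a lattice box of side `2K + 1`. Hence `2n ≤ (2K + 1)^d`, i.e.
`⌈(2n)^(1/d)⌉ ≤ 2K + 1`, which rearranges to the bound.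
-/

open Finset

section LatticeBox

variable {ι : Type*}

theorem abs_sub_le_two_mul_of_forall_mem_union {A B : Set (ι → ℤ)} (hA : A.Nonempty)
    (hB : B.Nonempty) {K : ℤ} (hAB : ∀ a ∈ A, ∀ b ∈ B, ∀ i, |a i - b i| ≤ K) :
    ∀ x ∈ A ∪ B, ∀ y ∈ A ∪ B, ∀ i, |x i - y i| ≤ 2 * K := by
  have hBA : ∀ b ∈ B, ∀ a ∈ A, ∀ i, |b i - a i| ≤ K := fun b hb a ha i => by
    rw [abs_sub_comm]; exact hAB a ha b hb i
  obtain ⟨a₀, ha₀⟩ := hA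
  obtain ⟨b₀, hb₀⟩ := hB
  intro x hx y hy i
  have hK : 0 ≤ K := (abs_nonneg _).trans (hAB a₀ ha₀ b₀ hb₀ i)
  rcases hx with hx | hx <;> rcases hy with hy | hy
  · linarith [abs_sub_le (x i) (b₀ i) (y i), hAB x hx b₀ hb₀ i, hBA b₀ hb₀ y hy i]
  · linarith [hAB x hx y hy i]
  · linarith [hBA x hx y hy i]
  · linarith [abs_sub_le (x i) (a₀ i) (y i), hBA x hx a₀ ha₀ i, hAB a₀ ha₀ y hy i]

theorem card_le_pow_of_abs_sub_le [Fintype ι] [DecidableEq ι] {S : Finset (ι → ℤ)} {D : ℕ}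
    (hS : ∀ x ∈ S, ∀ y ∈ S, ∀ i, |x i - y i| ≤ D) : #S ≤ (D + 1) ^ Fintype.card ι := by
  rcases S.eq_empty_or_nonempty with rfl | hne
  · simp
  set m : ι → ℤ := fun i => S.inf' hne (· i)
  have hbox : S ⊆ Icc m (m + fun _ => (D : ℤ)) := fun x hx => by
    refine mem_Icc.mpr ⟨fun i => inf'_le _ hx, fun i => ?_⟩
    obtain ⟨y, hy, hyi⟩ := exists_mem_eq_inf' hne (· i)
    have := (le_abs_self _).trans (hS x hx y hy i)
    simp only [Pi.add_apply, m, hyi]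
    linarith
  calc #S ≤ #(Icc m (m + fun _ => (D : ℤ))) := card_le_card hbox
    _ = ∏ _i : ι, (D + 1) := Pi.card_Icc _ _ |>.trans <| prod_congr rfl fun i _ => by
      rw [Int.card_Icc, Pi.add_apply, add_assoc, add_sub_cancel_left]; rfl
    _ = (D + 1) ^ Fintype.card ι := by rw [prod_const, card_univ]

end LatticeBox

theorem ceil_div_two_ceil_rpow_inv_sub_one_le {x : ℝ} (hx : 0 ≤ x) {d : ℕ} (hd : 0 < d) {k : ℕ}
    (h : x ≤ (2 * k + 1 : ℝ) ^ d) : ⌈(⌈x ^ ((1 : ℝ) / d)⌉ : ℝ) / 2⌉ - 1 ≤ (k : ℤ) := by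
  have hroot : x ^ ((1 : ℝ) / d) ≤ 2 * k + 1 := by
    rw [one_div, Real.rpow_inv_le_iff_of_pos hx (by positivity) (by exact_mod_cast hd),
      Real.rpow_natCast]
    exact h
  have hceil : ((⌈x ^ ((1 : ℝ) / d)⌉ : ℤ) : ℝ) ≤ 2 * k + 1 := by
    exact_mod_cast Int.ceil_le.mpr (by exact_mod_cast hroot)
  suffices ⌈(⌈x ^ ((1 : ℝ) / d)⌉ : ℝ) / 2⌉ ≤ (k : ℤ) + 1 by omega
  refine Int.ceil_le.mpr ?_
  push_cast
  linarith

/-- For positive integers `n` and `d`, if `A` and `B` are disjoint subsets of `ℤ^d` each of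
size `n`, then there exist `p ∈ A` and `q ∈ B` whose Chebyshev (L∞) distance
`max_{1 ≤ i ≤ d} |p i - q i|` is at least `⌈(1/2)·⌈(2n)^(1/d)⌉⌉ - 1`. -/
theorem point_crowding (n d : ℕ) (hn : 0 < n) (hd : 0 < d)
    (A B : Finset (Fin d → ℤ)) (hAB : Disjoint A B)
    (hA : A.card = n) (hB : B.card = n) :
    ∃ p ∈ A, ∃ q ∈ B,
      ((⌈(⌈((2 * n : ℝ)) ^ ((1 : ℝ) / d)⌉ : ℝ) / 2⌉ - 1 : ℤ)) ≤
        Finset.univ.sup' (Finset.univ_nonempty_iff.mpr ⟨⟨0, hd⟩⟩)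
          (fun i : Fin d => |p i - q i|) := by
  have hAne : A.Nonempty := card_pos.mp (hA ▸ hn)
  have hBne : B.Nonempty := card_pos.mp (hB ▸ hn)
  obtain ⟨⟨p, q⟩, hpq, hmax⟩ := exists_max_image (A ×ˢ B)
    (fun x => univ.sup' (univ_nonempty_iff.mpr ⟨⟨0, hd⟩⟩) fun i => |x.1 i - x.2 i|)
    (hAne.product hBne)
  obtain ⟨hp, hq⟩ := mem_product.mp hpq
  refine ⟨p, hp, q, hq, ?_⟩
  have hcross : ∀ a ∈ A, ∀ b ∈ B, ∀ i, |a i - b i| ≤ univ.sup' _ fun i => |p i - q i| :=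
    fun a ha b hb i => (le_sup' (fun j => |a j - b j|) (mem_univ i)).trans
      (hmax (a, b) (mem_product.mpr ⟨ha, hb⟩))
  obtain ⟨k, hk⟩ := Int.eq_ofNat_of_zero_le ((abs_nonneg _).trans (hcross p hp q hq ⟨0, hd⟩))
  rw [hk] at hcross ⊢
  have hcard : 2 * n ≤ (2 * k + 1) ^ d := by
    simpa [card_union_of_disjoint hAB, hA, hB, two_mul] using
      card_le_pow_of_abs_sub_le (S := A ∪ B) (D := 2 * k) (by
        push_cast; simpa only [← mem_coe, coe_union] using
          abs_sub_le_two_mul_of_forall_mem_union hAne hBne hcross)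
  exact ceil_div_two_ceil_rpow_inv_sub_one_le (by positivity) hd (by exact_mod_cast hcard)
end

section
/- Let t_1, ..., t_m be random variables where each t_i is a sum of k_i independent exponentially distributed random variables with rates λ_{i,j} ≥ λ > 0, and let k = max_i k_i and T = max(t_1, ..., t_m). Then E[T] = O((k + log m)/λ), i.e., there is a universal constant C such that E[T] ≤ C(k + log m)/λ. -/
/-!
Chernoff-type maximal inequality at `θ = λ / 2`. An exponential variable of rate `r ≥ λ` has
`E[exp (θ X)] = r / (r - θ) ≤ 2`, so by independence `E[exp (θ tᵢ)] ≤ 2 ^ k` for every `i`.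
Since `exp (θ T) ≤ ∑ᵢ exp (θ tᵢ)`, Jensen's inequality gives
`exp (θ E[T]) ≤ E[exp (θ T)] ≤ m 2 ^ k`, i.e. `E[T] ≤ 2 (k log 2 + log m) / λ`.
-/

open MeasureTheory ProbabilityTheory

/-- `X` is an exponentially distributed random variable with rate `r` on `(Ω, μ)`. -/
def IsExpRV {Ω : Type*} [MeasurableSpace Ω] (μ : Measure Ω) (r : ℝ) (X : Ω → ℝ) : Prop :=
  Measurable X ∧ μ.map X = ProbabilityTheory.expMeasure r

open Real Set

section Exponential

variable {Ω : Type*} [MeasurableSpace Ω] {μ : Measure Ω} {r θ : ℝ} {X : Ω → ℝ}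

lemma lintegral_exp_mul_expMeasure (hr : 0 < r) (hθ : θ < r) :
    ∫⁻ x, ENNReal.ofReal (exp (θ * x)) ∂expMeasure r = ENNReal.ofReal (r / (r - θ)) := by
  have hexpMeasure : expMeasure r = volume.withDensity (exponentialPDF r) := rfl
  have hdensity : exponentialPDF r * (fun x => ENNReal.ofReal (exp (θ * x))) =
      (Ici 0).indicator (fun x => ENNReal.ofReal (r * exp ((θ - r) * x))) := by
    ext x
    by_cases hx : 0 ≤ x
    · rw [Pi.mul_apply, exponentialPDF_of_nonneg hx, indicator_of_mem (mem_Ici.mpr hx),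
        ← ENNReal.ofReal_mul (by positivity), mul_assoc, ← exp_add]
      ring_nf
    · rw [Pi.mul_apply, exponentialPDF_of_neg (not_le.mp hx), zero_mul,
        indicator_of_notMem (by simpa using hx)]
  have hpdf : Measurable (exponentialPDF r) := (measurable_exponentialPDFReal r).ennreal_ofReal
  rw [hexpMeasure, lintegral_withDensity_eq_lintegral_mul _ hpdf (by fun_prop), hdensity,
    lintegral_indicator measurableSet_Ici, Measure.restrict_congr_set Ioi_ae_eq_Ici.symm,
    ← ofReal_integral_eq_lintegral_ofReal
      ((integrableOn_exp_mul_Ioi (by linarith) 0).const_mul r)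
      (Filter.Eventually.of_forall fun x => by positivity),
    integral_const_mul, integral_exp_mul_Ioi (by linarith), mul_zero, exp_zero, neg_div,
    ← div_neg, neg_sub, mul_one_div]

namespace IsExpRV

lemma lintegral_exp_mul (hX : IsExpRV μ r X) (hr : 0 < r) (hθ : θ < r) :
    ∫⁻ ω, ENNReal.ofReal (exp (θ * X ω)) ∂μ = ENNReal.ofReal (r / (r - θ)) := by
  rw [← lintegral_map (f := fun x => ENNReal.ofReal (exp (θ * x))) (by fun_prop) hX.1, hX.2,
    lintegral_exp_mul_expMeasure hr hθ]

lemma integrable_exp_mul (hX : IsExpRV μ r X) (hr : 0 < r) (hθ : θ < r) :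
    Integrable (fun ω => exp (θ * X ω)) μ := by
  refine ⟨by have := hX.1; fun_prop, ?_⟩
  rw [hasFiniteIntegral_iff_ofReal (Filter.Eventually.of_forall fun ω => (exp_pos _).le),
    hX.lintegral_exp_mul hr hθ]
  exact ENNReal.ofReal_lt_top

lemma integrable (hX : IsExpRV μ r X) (hr : 0 < r) : Integrable X μ := by
  have hneg := hX.integrable_exp_mul hr (θ := -(r / 2)) (by linarith)
  simpa using integrable_pow_of_integrable_exp_mul (t := r / 2) (by positivity)
    (hX.integrable_exp_mul hr (by linarith)) hneg 1

lemma mgf_eq (hX : IsExpRV μ r X) (hr : 0 < r) (hθ : θ < r) : mgf X μ θ = r / (r - θ) := by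
  have hrθ : 0 < r - θ := sub_pos.mpr hθ
  rw [mgf, integral_eq_lintegral_of_nonneg_ae (Filter.Eventually.of_forall fun ω => (exp_pos _).le)
      (hX.integrable_exp_mul hr hθ).1, hX.lintegral_exp_mul hr hθ,
    ENNReal.toReal_ofReal (by positivity)]

lemma mgf_le_two (hX : IsExpRV μ r X) (hr : 0 < r) (hθ : 2 * θ ≤ r) : mgf X μ θ ≤ 2 := by
  rw [hX.mgf_eq hr (by linarith), div_le_iff₀ (by linarith)]
  linarith

end IsExpRV

end Exponential

theorem MeasureTheory.Integrable.finset_sup' {α ι β : Type*} [MeasurableSpace α] {μ : Measure α}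
    [NormedAddCommGroup β] [Lattice β] [HasSolidNorm β] [IsOrderedAddMonoid β]
    {s : Finset ι} (hs : s.Nonempty) {f : ι → α → β} (hf : ∀ i ∈ s, Integrable (f i) μ) :
    Integrable (s.sup' hs f) μ :=
  Finset.sup'_induction (p := fun g => Integrable g μ) hs f (fun _ hf _ hg => hf.sup hg) hf

lemma exp_mul_sup'_le_sum_exp_mul {ι : Type*} {s : Finset ι} (hs : s.Nonempty) (y : ι → ℝ)
    (t : ℝ) : exp (t * s.sup' hs y) ≤ ∑ i ∈ s, exp (t * y i) := by
  obtain ⟨i, hi, hmax⟩ := Finset.exists_mem_eq_sup' hs y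
  rw [hmax]
  exact Finset.single_le_sum (f := fun i => exp (t * y i)) (fun _ _ => (exp_pos _).le) hi

namespace ProbabilityTheory

variable {Ω : Type*} [MeasurableSpace Ω] {μ : Measure Ω} {t : ℝ}

lemma exp_mul_integral_le_mgf [IsProbabilityMeasure μ] {X : Ω → ℝ} (hX : Integrable X μ)
    (hexp : Integrable (fun ω => exp (t * X ω)) μ) : exp (t * μ[X]) ≤ mgf X μ t := by
  rw [← integral_const_mul]
  exact convexOn_exp.map_integral_le continuous_exp.continuousOn isClosed_univ
    (Filter.Eventually.of_forall fun _ => mem_univ _) (hX.const_mul t) hexp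

lemma mgf_sup'_le_sum_mgf {ι : Type*} {s : Finset ι} (hs : s.Nonempty) {Y : ι → Ω → ℝ}
    (hexp : ∀ i ∈ s, Integrable (fun ω => exp (t * Y i ω)) μ) :
    mgf (fun ω => s.sup' hs (Y · ω)) μ t ≤ ∑ i ∈ s, mgf (Y i) μ t := by
  simp only [mgf]
  rw [← integral_finsetSum _ hexp]
  exact integral_mono_of_nonneg (Filter.Eventually.of_forall fun _ => (exp_pos _).le)
    (integrable_finsetSum _ hexp)
    (Filter.Eventually.of_forall fun ω => exp_mul_sup'_le_sum_exp_mul hs (Y · ω) t)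

theorem integral_sup'_le_log_card_mul_div [IsProbabilityMeasure μ] {ι : Type*} {s : Finset ι}
    (hs : s.Nonempty) {Y : ι → Ω → ℝ} {M : ℝ} (ht : 0 < t) (hY : ∀ i ∈ s, Integrable (Y i) μ)
    (hexp : ∀ i ∈ s, Integrable (fun ω => exp (t * Y i ω)) μ) (hM : ∀ i ∈ s, mgf (Y i) μ t ≤ M) :
    ∫ ω, s.sup' hs (Y · ω) ∂μ ≤ log (s.card * M) / t := by
  set T := fun ω => s.sup' hs (Y · ω)
  have hT : Integrable T μ := by
    simpa only [T, ← Finset.sup'_apply] using Integrable.finset_sup' hs hY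
  have hTexp : Integrable (fun ω => exp (t * T ω)) μ :=
    (integrable_finsetSum s hexp).mono' (by have := hT.1; fun_prop)
      (Filter.Eventually.of_forall fun ω => by
        rw [norm_of_nonneg (exp_pos _).le]
        exact exp_mul_sup'_le_sum_exp_mul hs (Y · ω) t)
  have hmgf : exp (t * μ[T]) ≤ s.card * M := calc
    exp (t * μ[T]) ≤ mgf T μ t := exp_mul_integral_le_mgf hT hTexp
    _ ≤ ∑ i ∈ s, mgf (Y i) μ t := mgf_sup'_le_sum_mgf hs hexp
    _ ≤ ∑ _i ∈ s, M := Finset.sum_le_sum hM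
    _ = s.card * M := by rw [Finset.sum_const, nsmul_eq_mul]
  rw [le_div_iff₀ ht, mul_comm, ← log_exp (t * μ[T])]
  exact log_le_log (exp_pos _) hmgf

lemma iIndepFun.mgf_sum_le_pow {ι : Type*} [Fintype ι] {X : ι → Ω → ℝ} {M : ℝ}
    (hindep : iIndepFun X μ) (hmeas : ∀ i, Measurable (X i)) (hM : ∀ i, mgf (X i) μ t ≤ M) :
    mgf (fun ω => ∑ i, X i ω) μ t ≤ M ^ Fintype.card ι := by
  rw [← Finset.sum_fn, hindep.mgf_sum hmeas, ← Finset.card_univ, ← Finset.prod_const]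
  exact Finset.prod_le_prod (fun _ _ => mgf_nonneg) (fun i _ => hM i)

end ProbabilityTheory

lemma log_mul_two_pow_le (x : ℝ) (k : ℕ) : log (x * 2 ^ k) ≤ k + log x := by
  rcases eq_or_ne x 0 with rfl | hx
  · simp
  rw [log_mul hx (by positivity), log_pow]
  nlinarith [log_two_lt_d9]

/-- There is a universal constant `C` such that: if `t_1, …, t_m` are random variables,
each `t_i` a sum of `k_i` independent exponentially distributed random variables with rates
`lamf i j ≥ lam > 0`, `k = max_i k_i`, and `T = max_i t_i`, then
`E[T] ≤ C * (k + log m) / lam`. -/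
theorem max_of_sums_of_exponentials_upper :
    ∃ C : ℝ, 0 < C ∧
      ∀ (Ω : Type) [MeasurableSpace Ω] (μ : Measure Ω), IsProbabilityMeasure μ →
        ∀ (m : ℕ) (hm : 0 < m) (kf : Fin m → ℕ) (k : ℕ), k = Finset.univ.sup kf →
          ∀ (lam : ℝ), 0 < lam →
            ∀ (lamf : (i : Fin m) → Fin (kf i) → ℝ), (∀ i j, lam ≤ lamf i j) →
              ∀ (e : (i : Fin m) → Fin (kf i) → Ω → ℝ),
                (∀ i j, IsExpRV μ (lamf i j) (e i j)) →
                iIndepFun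
                  (fun p : Σ i : Fin m, Fin (kf i) => e p.1 p.2) μ →
                ∫ ω, (Finset.univ.sup'
                    (Finset.univ_nonempty_iff.mpr ⟨⟨0, hm⟩⟩)
                    (fun i : Fin m => ∑ j, e i j ω)) ∂μ ≤
                  C * ((k : ℝ) + Real.log m) / lam := by
  refine ⟨2, two_pos, ?_⟩
  intro Ω _ μ _ m hm kf k hk lam hlam lamf hlamf e he hindep
  have hrate : ∀ i j, 0 < lamf i j := fun i j => hlam.trans_le (hlamf i j)
  have hmeas : ∀ i j, Measurable (e i j) := fun i j => (he i j).1
  have hrow : ∀ i, iIndepFun (e i) μ := fun i =>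
    hindep.precomp (g := Sigma.mk i) sigma_mk_injective
  have hrow_mgf : ∀ i, mgf (fun ω => ∑ j, e i j ω) μ (lam / 2) ≤ 2 ^ k := fun i => calc
    mgf (fun ω => ∑ j, e i j ω) μ (lam / 2) ≤ 2 ^ kf i := by
      simpa only [Fintype.card_fin] using (hrow i).mgf_sum_le_pow (t := lam / 2) (hmeas i)
        fun j => (he i j).mgf_le_two (hrate i j) (by linarith [hlamf i j])
    _ ≤ 2 ^ k := pow_le_pow_right₀ one_le_two (hk ▸ Finset.le_sup (Finset.mem_univ i))
  calc _ ≤ log ((Finset.univ : Finset (Fin m)).card * 2 ^ k) / (lam / 2) :=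
        integral_sup'_le_log_card_mul_div _ (half_pos hlam)
          (fun i _ => integrable_finsetSum _ fun j _ => (he i j).integrable (hrate i j))
          (fun i _ => by
            simpa only [Finset.sum_apply] using
              (hrow i).integrable_exp_mul_sum (hmeas i) (s := Finset.univ)
              fun j _ => (he i j).integrable_exp_mul (hrate i j) (by linarith [hlamf i j]))
          (fun i _ => hrow_mgf i)
    _ ≤ 2 * (k + log m) / lam := by
      rw [div_div_eq_mul_div, Finset.card_univ, Fintype.card_fin, mul_comm _ (2 : ℝ)]
      gcongr
      exact log_mul_two_pow_le m k
end

section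
/- Let t_1, ..., t_m be as above with all rates λ_{i,j} ≤ λ' and k = max_i k_i, T = max_i t_i. Then E[T] = Ω((k + log m)/λ'), i.e., there exists a universal constant c > 0 with E[T] ≥ c(k + log m)/λ'. -/
/-!
Each `t_i` is a sum of `k_i` exponentials with means `1/λ_{i,j} ≥ 1/λ'`, so
`E[T] ≥ E[t_i] ≥ k/λ'` for an index with `k_i = k`. For the logarithmic term put
`a = log m / λ'`: the first summands of the `m` sums are independent and each is at most `a` with
probability `1 - e^{-λ_{i,1} a} ≤ 1 - 1/m`, so `P(T < a) ≤ (1 - 1/m)^m ≤ e⁻¹ < 1/2`, and Markov's inequality gives `E[T] ≥ a/2`.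
Together, `E[T] ≥ (k + log m)/(3λ')`.
-/

open MeasureTheory ProbabilityTheory

open Real Set

lemma integral_id_expMeasure {r : ℝ} (hr : 0 < r) : ∫ x, x ∂expMeasure r = r⁻¹ := by
  have hdens : ∀ x, (exponentialPDF r x).toReal • x
      = (Ici 0).indicator (fun x ↦ r * (x ^ ((2 : ℝ) - 1) * exp (-(r * x)))) x := by
    intro x
    rcases lt_or_ge x 0 with hx | hx
    · simp [exponentialPDF_of_neg hx, hx.not_ge]
    · rw [exponentialPDF_of_nonneg hx, ENNReal.toReal_ofReal (by positivity),
        indicator_of_mem (mem_Ici.mpr hx)]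
      norm_num
      ring
  change ∫ x, x ∂(volume.withDensity (exponentialPDF r)) = r⁻¹
  rw [integral_withDensity_eq_integral_toReal_smul (f := exponentialPDF r)
    (measurable_exponentialPDFReal r).ennreal_ofReal
    (ae_of_all _ fun _ ↦ ENNReal.ofReal_lt_top)]
  simp_rw [hdens]
  rw [integral_indicator measurableSet_Ici, integral_Ici_eq_integral_Ioi, integral_const_mul,
    integral_rpow_mul_exp_neg_mul_Ioi two_pos hr, Gamma_two, mul_one, rpow_two]
  field_simp

lemma integrable_id_expMeasure {r : ℝ} (hr : 0 < r) : Integrable id (expMeasure r) :=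
  .of_integral_ne_zero (by simpa [integral_id_expMeasure hr] using hr.ne')

section IsExpRV

variable {Ω : Type*} [MeasurableSpace Ω] {μ : Measure Ω} {r : ℝ} {X : Ω → ℝ}

lemma IsExpRV.integrable_s5 (hX : IsExpRV μ r X) (hr : 0 < r) : Integrable X μ :=
  (integrable_map_measure aestronglyMeasurable_id hX.1.aemeasurable).mp
    (hX.2 ▸ integrable_id_expMeasure hr)

lemma IsExpRV.integral_eq (hX : IsExpRV μ r X) (hr : 0 < r) : ∫ ω, X ω ∂μ = r⁻¹ := by
  rw [← integral_id_expMeasure hr, ← hX.2]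
  exact (integral_map hX.1.aemeasurable aestronglyMeasurable_id).symm

lemma IsExpRV.measureReal_setOf_le (hX : IsExpRV μ r X) (hr : 0 < r) {x : ℝ} (hx : 0 ≤ x) :
    μ.real {ω | X ω ≤ x} = 1 - exp (-(r * x)) := by
  have := isProbabilityMeasure_expMeasure hr
  have h := cdf_expMeasure_eq hr x
  rw [if_pos hx, cdf_eq_real, ← hX.2, map_measureReal_apply hX.1 measurableSet_Iic] at h
  exact h

lemma IsExpRV.ae_nonneg (hX : IsExpRV μ r X) : 0 ≤ᵐ[μ] X := by
  have h : ∀ᵐ x ∂expMeasure r, 0 ≤ x := by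
    simp only [ae_iff, not_le]
    change volume.withDensity (exponentialPDF r) (Iio 0) = 0
    rw [withDensity_apply _ measurableSet_Iio, lintegral_exponentialPDF_of_nonpos le_rfl]
  exact ae_of_ae_map hX.1.aemeasurable (hX.2 ▸ h)

lemma IsExpRV.measureReal_setOf_le_le_of_rate_le (hX : IsExpRV μ r X) (hr : 0 < r) {r' x : ℝ}
    (hrr' : r ≤ r') (hx : 0 ≤ x) : μ.real {ω | X ω ≤ x} ≤ 1 - exp (-(r' * x)) := by
  rw [hX.measureReal_setOf_le hr hx]
  gcongr

end IsExpRV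

lemma one_sub_inv_pow_le_exp_neg_one {n : ℕ} (hn : 1 ≤ n) : (1 - (n : ℝ)⁻¹) ^ n ≤ exp (-1) := by
  simpa [one_div] using one_sub_div_pow_le_exp_neg (n := n) (t := 1) (by exact_mod_cast hn)

section Probability

variable {Ω : Type*} [MeasurableSpace Ω] {μ : Measure Ω}

lemma mul_one_sub_measureReal_lt_le_integral [IsProbabilityMeasure μ] {f : Ω → ℝ}
    (hf₀ : 0 ≤ᵐ[μ] f) (hf : Integrable f μ) (a : ℝ) :
    a * (1 - μ.real {ω | f ω < a}) ≤ ∫ ω, f ω ∂μ := by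
  have hcompl : {ω | a ≤ f ω} = {ω | f ω < a}ᶜ := by ext; simp
  rw [← probReal_compl_eq_one_sub₀ (nullMeasurableSet_lt hf.aemeasurable aemeasurable_const),
    ← hcompl]
  exact mul_meas_ge_le_integral_of_nonneg hf₀ hf a

lemma ProbabilityTheory.iIndepFun.measureReal_forall_le_le_pow {ι : Type*} [Fintype ι]
    {X : ι → Ω → ℝ} (hX : iIndepFun X μ) {a q : ℝ} (hq : ∀ i, μ.real {ω | X i ω ≤ a} ≤ q) :
    μ.real {ω | ∀ i, X i ω ≤ a} ≤ q ^ Fintype.card ι := by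
  have hset : {ω | ∀ i, X i ω ≤ a} = ⋂ i ∈ (Finset.univ : Finset ι), X i ⁻¹' Iic a := by
    ext; simp
  rw [hset, measureReal_def, hX.measure_inter_preimage_eq_mul _ (fun _ _ ↦ measurableSet_Iic),
    ENNReal.toReal_prod, ← Finset.card_univ, ← Finset.prod_const]
  exact Finset.prod_le_prod (fun _ _ ↦ ENNReal.toReal_nonneg) fun i _ ↦ hq i

lemma Finset.integrable_sup' {ι : Type*} {s : Finset ι} (hs : s.Nonempty) {f : ι → Ω → ℝ}
    (hf : ∀ i ∈ s, Integrable (f i) μ) : Integrable (fun ω ↦ s.sup' hs fun i ↦ f i ω) μ := by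
  simp_rw [← Finset.sup'_apply]
  exact Finset.sup'_induction (p := fun g ↦ Integrable g μ) hs f (fun _ hg _ hh ↦ hg.sup hh) hf

end Probability

section MaxOfSums

open Finset

variable {Ω ι : Type*} [MeasurableSpace Ω] {μ : Measure Ω} [Fintype ι] {κ : ι → Type*}
  [∀ i, Fintype (κ i)] {rate : (i : ι) → κ i → ℝ} {e : (i : ι) → κ i → Ω → ℝ} {lam' : ℝ}
  (hne : (univ : Finset ι).Nonempty)

lemma integrable_sup'_sum_of_isExpRV (he : ∀ i j, IsExpRV μ (rate i j) (e i j))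
    (hrate : ∀ i j, 0 < rate i j) :
    Integrable (fun ω ↦ univ.sup' hne fun i ↦ ∑ j, e i j ω) μ :=
  integrable_sup' hne fun i _ ↦ integrable_finsetSum _ fun j _ ↦ (he i j).integrable_s5 (hrate i j)

lemma card_div_le_integral_sup'_sum (he : ∀ i j, IsExpRV μ (rate i j) (e i j))
    (hrate : ∀ i j, 0 < rate i j) (hle : ∀ i j, rate i j ≤ lam') (i : ι) :
    Fintype.card (κ i) / lam' ≤ ∫ ω, univ.sup' hne (fun i ↦ ∑ j, e i j ω) ∂μ :=
  calc (Fintype.card (κ i) : ℝ) / lam' = ∑ _j : κ i, lam'⁻¹ := by simp [div_eq_mul_inv]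
    _ ≤ ∑ j, (rate i j)⁻¹ := sum_le_sum fun j _ ↦ inv_anti₀ (hrate i j) (hle i j)
    _ = ∫ ω, ∑ j, e i j ω ∂μ := by
      rw [integral_finsetSum _ fun j _ ↦ (he i j).integrable_s5 (hrate i j)]
      exact sum_congr rfl fun j _ ↦ ((he i j).integral_eq (hrate i j)).symm
    _ ≤ _ := integral_mono (integrable_finsetSum _ fun j _ ↦ (he i j).integrable_s5 (hrate i j))
      (integrable_sup'_sum_of_isExpRV hne he hrate) fun ω ↦
        le_sup' (fun i ↦ ∑ j, e i j ω) (mem_univ i)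

lemma measureReal_sup'_sum_lt_le_exp_neg_one [IsFiniteMeasure μ]
    (he : ∀ i j, IsExpRV μ (rate i j) (e i j)) (hrate : ∀ i j, 0 < rate i j)
    (hle : ∀ i j, rate i j ≤ lam') (hlam' : 0 < lam') (j₀ : ∀ i, κ i)
    (hind : iIndepFun (fun i ↦ e i (j₀ i)) μ) :
    μ.real {ω | univ.sup' hne (fun i ↦ ∑ j, e i j ω) < Real.log (Fintype.card ι) / lam'}
      ≤ exp (-1) := by
  set n := Fintype.card ι
  set a := Real.log n / lam'
  have hn : 1 ≤ n := hne.card_pos.trans_eq card_univ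
  have ha : 0 ≤ a := div_nonneg (Real.log_nonneg (by exact_mod_cast hn)) hlam'.le
  have hq : ∀ i, μ.real {ω | e i (j₀ i) ω ≤ a} ≤ 1 - (n : ℝ)⁻¹ := fun i ↦ by
    have hexp : exp (-(lam' * a)) = (n : ℝ)⁻¹ := by
      rw [mul_div_cancel₀ _ hlam'.ne', exp_neg, exp_log (by exact_mod_cast hn)]
    exact hexp ▸ (he i (j₀ i)).measureReal_setOf_le_le_of_rate_le (hrate i _) (hle i _) ha
  have hsub : {ω | univ.sup' hne (fun i ↦ ∑ j, e i j ω) < a}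
      ≤ᵐ[μ] {ω | ∀ i, e i (j₀ i) ω ≤ a} := by
    have h0 : ∀ᵐ ω ∂μ, ∀ i j, 0 ≤ e i j ω := by
      simp only [ae_all_iff]
      exact fun i j ↦ (he i j).ae_nonneg
    filter_upwards [h0] with ω hω hlt i
    calc e i (j₀ i) ω ≤ ∑ j, e i j ω := single_le_sum (fun j _ ↦ hω i j) (mem_univ _)
      _ ≤ univ.sup' hne (fun i ↦ ∑ j, e i j ω) := le_sup' (fun i ↦ ∑ j, e i j ω) (mem_univ i)
      _ ≤ a := le_of_lt hlt
  calc _ ≤ μ.real {ω | ∀ i, e i (j₀ i) ω ≤ a} :=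
        ENNReal.toReal_mono (measure_ne_top _ _) (measure_mono_ae hsub)
    _ ≤ (1 - (n : ℝ)⁻¹) ^ n := hind.measureReal_forall_le_le_pow hq
    _ ≤ exp (-1) := one_sub_inv_pow_le_exp_neg_one hn

lemma log_card_div_le_integral_sup'_sum [IsProbabilityMeasure μ]
    (he : ∀ i j, IsExpRV μ (rate i j) (e i j)) (hrate : ∀ i j, 0 < rate i j)
    (hle : ∀ i j, rate i j ≤ lam') (hlam' : 0 < lam') (j₀ : ∀ i, κ i)
    (hind : iIndepFun (fun i ↦ e i (j₀ i)) μ) :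
    Real.log (Fintype.card ι) / (2 * lam') ≤ ∫ ω, univ.sup' hne (fun i ↦ ∑ j, e i j ω) ∂μ := by
  have ⟨i₀, _⟩ := hne
  have hT₀ : 0 ≤ᵐ[μ] fun ω ↦ univ.sup' hne (fun i ↦ ∑ j, e i j ω) := by
    filter_upwards [ae_all_iff.mpr fun j ↦ (he i₀ j).ae_nonneg] with ω hω
    exact (sum_nonneg fun j _ ↦ hω j).trans (le_sup' (fun i ↦ ∑ j, e i j ω) (mem_univ i₀))
  have ha : 0 ≤ Real.log (Fintype.card ι) / lam' :=
    div_nonneg (Real.log_nonneg (by exact_mod_cast hne.card_pos.trans_eq card_univ)) hlam'.le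
  have hsmall := (measureReal_sup'_sum_lt_le_exp_neg_one hne he hrate hle hlam' j₀ hind).trans
    exp_neg_one_lt_half.le
  calc Real.log (Fintype.card ι) / (2 * lam')
        = Real.log (Fintype.card ι) / lam' * (1 - 1 / 2) := by field_simp; ring
    _ ≤ _ := by gcongr
    _ ≤ _ := mul_one_sub_measureReal_lt_le_integral hT₀
        (integrable_sup'_sum_of_isExpRV hne he hrate) _

end MaxOfSums

/-- There is a universal constant `c > 0` such that: if `t_1, …, t_m` are random variables,
each `t_i` a sum of `k_i ≥ 1` independent exponentially distributed random variables with
rates `lamf i j ≤ lam'`, `k = max_i k_i`, and `T = max_i t_i`, then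
`E[T] ≥ c * (k + log m) / lam'`. -/
theorem max_of_sums_of_exponentials_lower :
    ∃ c : ℝ, 0 < c ∧
      ∀ (Ω : Type) [MeasurableSpace Ω] (μ : Measure Ω), IsProbabilityMeasure μ →
        ∀ (m : ℕ) (hm : 0 < m) (kf : Fin m → ℕ), (∀ i, 0 < kf i) →
          ∀ (k : ℕ), k = Finset.univ.sup kf →
          ∀ (lam' : ℝ), 0 < lam' →
            ∀ (lamf : (i : Fin m) → Fin (kf i) → ℝ),
              (∀ i j, 0 < lamf i j) → (∀ i j, lamf i j ≤ lam') →
              ∀ (e : (i : Fin m) → Fin (kf i) → Ω → ℝ),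
                (∀ i j, IsExpRV μ (lamf i j) (e i j)) →
                iIndepFun
                  (fun p : Σ i : Fin m, Fin (kf i) => e p.1 p.2) μ →
                c * ((k : ℝ) + Real.log m) / lam' ≤
                  ∫ ω, (Finset.univ.sup'
                    (Finset.univ_nonempty_iff.mpr ⟨⟨0, hm⟩⟩)
                    (fun i : Fin m => ∑ j, e i j ω)) ∂μ := by
  refine ⟨1 / 3, by norm_num, ?_⟩
  intro Ω _ μ _ m hm kf hkf k hk lam' hlam' lamf hlamf hle e he hind
  have hne : (Finset.univ : Finset (Fin m)).Nonempty := Finset.univ_nonempty_iff.mpr ⟨⟨0, hm⟩⟩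
  obtain ⟨i₀, -, hi₀⟩ := Finset.exists_mem_eq_sup Finset.univ hne kf
  have hk_le := card_div_le_integral_sup'_sum hne he hlamf hle i₀
  have hlog_le := log_card_div_le_integral_sup'_sum hne he hlamf hle hlam' (fun i ↦ ⟨0, hkf i⟩)
    (hind.precomp (g := fun i ↦ ⟨i, ⟨0, hkf i⟩⟩) fun _ _ h ↦ congrArg Sigma.fst h)
  rw [Fintype.card_fin, ← hi₀, ← hk] at hk_le
  rw [Fintype.card_fin] at hlog_le
  calc 1 / 3 * ((k : ℝ) + Real.log m) / lam'
        = (k / lam' + 2 * (Real.log m / (2 * lam'))) / 3 := by field_simp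
    _ ≤ _ := by linarith
end

section
/- Let a = a_n...a_1 and b = b_n...b_1 be n-bit numbers where, for fixed indices i > j: a_k = 0 for k > i and for k < j, a_k = 1 for j ≤ k < i, b_k = 0 for all k ≠ j, and a_i, b_j ∈ {0,1} are free. Then the (i+1)-st bit of a + b equals a_i AND b_j. -/
/-! The ones `a_j, …, a_{i-1}` add up to `2^(i-1) - 2^(j-1)`. If `b_j = 1`, the carry runs
through the whole block and the sum becomes `(a_i + 1) * 2^(i-1)`, whose bit `i` is `a_i`;
if `b_j = 0`, the sum stays below `2^i`. -/

theorem two_pow_pred_add_sum_Ico {j : ℕ} (hj : 1 ≤ j) {i : ℕ} (hji : j ≤ i) :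
    2 ^ (j - 1) + ∑ k ∈ Finset.Ico j i, 2 ^ (k - 1) = 2 ^ (i - 1) := by
  induction i, hji using Nat.le_induction with
  | base => simp
  | succ i hji ih =>
    rw [Finset.sum_Ico_succ_top hji, ← add_assoc, ih, Nat.add_sub_cancel,
      Nat.two_pow_pred_mul_two (by omega : 0 < i) |>.symm]
    ring

theorem addition_encodes_and_general (i j : ℕ) (hj : 1 ≤ j) (hji : j < i)
    (ai bj : ℕ) (hai : ai ≤ 1) (hbj : bj ≤ 1) :
    ((ai * 2 ^ (i - 1) + ∑ k ∈ Finset.Ico j i, 2 ^ (k - 1)) + bj * 2 ^ (j - 1)) / 2 ^ i % 2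
      = ai * bj := by
  have hblock := two_pow_pred_add_sum_Ico hj hji.le
  have hpos : 0 < 2 ^ (j - 1) := Nat.two_pow_pos _
  have hi := Nat.two_pow_pred_mul_two (by omega : 0 < i)
  have hquot : ((ai * 2 ^ (i - 1) + ∑ k ∈ Finset.Ico j i, 2 ^ (k - 1)) + bj * 2 ^ (j - 1))
      / 2 ^ i = ai * bj := by
    apply Nat.div_eq_of_lt_le <;>
      interval_cases ai <;> interval_cases bj <;> omega
  rw [hquot]
  exact Nat.mod_eq_of_lt (by nlinarith)

/-- Let `a = a_n…a_1` and `b = b_n…b_1` be `n`-bit numbers (with `a = Σ_k a_k 2^(k-1)`)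
where, for fixed indices `i > j ≥ 1`: `a_k = 0` for `k > i` and `k < j`, `a_k = 1` for
`j ≤ k < i`, `b_k = 0` for all `k ≠ j`, and the bits `ai = a_i` and `bj = b_j` are free.
Then the `(i+1)`-st bit of `a + b`, namely `⌊(a+b)/2^i⌋ mod 2`, equals `a_i AND b_j`. -/
theorem addition_encodes_and (n i j : ℕ) (hj : 1 ≤ j) (hji : j < i) (hin : i ≤ n)
    (ai bj : ℕ) (hai : ai ≤ 1) (hbj : bj ≤ 1) :
    ((ai * 2 ^ (i - 1) + ∑ k ∈ Finset.Ico j i, 2 ^ (k - 1)) + bj * 2 ^ (j - 1)) / 2 ^ i % 2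
      = ai * bj :=
  addition_encodes_and_general i j hj hji ai bj hai hbj
end

section
/- If f(n) denotes the minimum worst-case number of parallel tile-attachment steps over inputs, and the adder construction completes in at most 2k + 8 parallel steps where k is the length of the longest contiguous run of unequal addend-pairs (a_i ≠ b_i), then the expected number of parallel steps over uniformly random n-bit inputs A, B is O(log n), and the worst case is O(n). -/
open scoped Classical in
/-- The length of the longest run of consecutive 1s among the `n` low-order bits of `N`. -/
noncomputable def longestRunOfOnes (n N : ℕ) : ℕ :=
  (Finset.range (n + 1)).sup fun l =>
    if ∃ i, i + l ≤ n ∧ ∀ j < l, N.testBit (i + j) = true then l else 0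

/-- The length of the longest contiguous run of positions (among the low `n`) where the
bits of `A` and `B` differ, i.e. the longest run of 1s of the XOR of `A` and `B`. -/
noncomputable def longestDiffRun (n A B : ℕ) : ℕ := longestRunOfOnes n (A ^^^ B)

/-!
For uniform `A, B < 2 ^ n` the XOR `A ^^^ B` is again uniform, so it suffices to bound the
mean longest run `R` of ones of a uniform `X < 2 ^ n`. A run of `l` ones at a fixed position
has probability `2 ^ (-l)`, so by a union bound over the `n` starting positions
`P(R ≥ l) ≤ n 2 ^ (-l)`. Choosing `L` with `n² ≤ 2 ^ L`, the pointwise bound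
`R ≤ L + n · 1[R > L]` gives `E R ≤ L + n · n 2 ^ (-L - 1) ≤ L + 1 = O(log n)`.
-/

open Finset

lemma longestRunOfOnes_le (n N : ℕ) : longestRunOfOnes n N ≤ n := by
  classical
  refine Finset.sup_le fun l _ => ?_
  split_ifs with h
  · obtain ⟨i, hi, -⟩ := h
    omega
  · exact Nat.zero_le _

lemma exists_run_of_le_longestRunOfOnes {n l N : ℕ} (hl : 0 < l)
    (h : l ≤ longestRunOfOnes n N) : ∃ i, i + l ≤ n ∧ ∀ j < l, N.testBit (i + j) = true := by
  classical
  rw [longestRunOfOnes, Finset.le_sup_iff hl] at h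
  obtain ⟨l', -, hl'⟩ := h
  split_ifs at hl' with hrun
  · obtain ⟨i, hi, hones⟩ := hrun
    exact ⟨i, by omega, fun j hj => hones j (by omega)⟩
  · omega

lemma card_filter_testBit_run_le {n i l : ℕ} (h : i + l ≤ n) :
    #{X ∈ range (2 ^ n) | ∀ j < l, X.testBit (i + j) = true} ≤ 2 ^ (n - l) := by
  -- such an `X` is determined by its bits below `i` and its bits from `i + l` on
  calc #{X ∈ range (2 ^ n) | ∀ j < l, X.testBit (i + j) = true}
      ≤ #(range (2 ^ i) ×ˢ range (2 ^ (n - (i + l)))) := by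
        refine card_le_card_of_injOn (fun X => (X % 2 ^ i, X / 2 ^ (i + l))) ?_ ?_
        · intro X hX
          simp only [coe_filter, mem_range, Set.mem_ofPred_eq] at hX
          simp only [coe_product, coe_range, Set.mem_prod, Set.mem_Iio]
          refine ⟨Nat.mod_lt _ (by positivity), Nat.div_lt_of_lt_mul ?_⟩
          rw [← pow_add, Nat.add_sub_cancel' h]
          exact hX.1
        · intro X hX Y hY hXY
          simp only [coe_filter, mem_range, Set.mem_ofPred_eq] at hX hY
          simp only [Prod.mk.injEq] at hXY
          refine Nat.eq_of_testBit_eq fun j => ?_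
          rcases lt_or_ge j i with hji | hij
          · simpa [Nat.testBit_mod_two_pow, hji] using congrArg (Nat.testBit · j) hXY.1
          obtain ⟨k, rfl⟩ := Nat.exists_eq_add_of_le hij
          rcases lt_or_ge k l with hkl | hlk
          · rw [hX.2 k hkl, hY.2 k hkl]
          · simpa [Nat.testBit_div_two_pow, Nat.sub_add_cancel (by omega : i + l ≤ i + k)]
              using congrArg (Nat.testBit · (i + k - (i + l))) hXY.2
    _ = 2 ^ (n - l) := by
        rw [card_product, card_range, card_range, ← pow_add]
        congr 1
        omega

lemma card_filter_le_longestRunOfOnes_mul_le (n : ℕ) {l : ℕ} (hl : 0 < l) :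
    #{X ∈ range (2 ^ n) | l ≤ longestRunOfOnes n X} * 2 ^ l ≤ n * 2 ^ n := by
  by_cases hln : l ≤ n
  · have hunion : {X ∈ range (2 ^ n) | l ≤ longestRunOfOnes n X} ⊆
        (range (n + 1 - l)).biUnion fun i =>
          {X ∈ range (2 ^ n) | ∀ j < l, X.testBit (i + j) = true} := by
      intro X hX
      rw [mem_filter] at hX
      obtain ⟨i, hi, hones⟩ := exists_run_of_le_longestRunOfOnes hl hX.2
      simp only [mem_biUnion, mem_filter, mem_range]
      exact ⟨i, by omega, mem_range.1 hX.1, hones⟩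
    calc #{X ∈ range (2 ^ n) | l ≤ longestRunOfOnes n X} * 2 ^ l
        ≤ (∑ i ∈ range (n + 1 - l),
            #{X ∈ range (2 ^ n) | ∀ j < l, X.testBit (i + j) = true}) * 2 ^ l := by
          gcongr
          exact (card_le_card hunion).trans card_biUnion_le
      _ ≤ (∑ _i ∈ range (n + 1 - l), 2 ^ (n - l)) * 2 ^ l := by
          gcongr with i hi
          exact card_filter_testBit_run_le (by rw [mem_range] at hi; omega)
      _ = (n + 1 - l) * 2 ^ n := by
          rw [sum_const, card_range, smul_eq_mul, mul_assoc, ← pow_add, Nat.sub_add_cancel hln]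
      _ ≤ n * 2 ^ n := by gcongr; omega
  · have hempty : {X ∈ range (2 ^ n) | l ≤ longestRunOfOnes n X} = ∅ :=
      filter_false_of_mem fun X _ => by have := longestRunOfOnes_le n X; omega
    simp [hempty]

lemma sum_longestRunOfOnes_le {n L : ℕ} (hL : n * n ≤ 2 ^ L) :
    ∑ X ∈ range (2 ^ n), longestRunOfOnes n X ≤ (L + 1) * 2 ^ n := by
  set long := #{X ∈ range (2 ^ n) | L + 1 ≤ longestRunOfOnes n X}
  have hlong : n * long ≤ 2 ^ n := by
    refine Nat.le_of_mul_le_mul_right ?_ (pow_pos two_pos (L + 1))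
    calc n * long * 2 ^ (L + 1) = n * (long * 2 ^ (L + 1)) := mul_assoc _ _ _
      _ ≤ n * (n * 2 ^ n) :=
        Nat.mul_le_mul_left n (card_filter_le_longestRunOfOnes_mul_le n L.succ_pos)
      _ ≤ 2 ^ L * 2 ^ n := by rw [← mul_assoc]; gcongr
      _ ≤ 2 ^ n * 2 ^ (L + 1) := by rw [mul_comm]; gcongr <;> omega
  calc ∑ X ∈ range (2 ^ n), longestRunOfOnes n X
      ≤ ∑ X ∈ range (2 ^ n), (L + n * if L + 1 ≤ longestRunOfOnes n X then 1 else 0) := by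
        gcongr with X
        have := longestRunOfOnes_le n X
        split_ifs <;> omega
    _ = L * 2 ^ n + n * long := by
        rw [sum_add_distrib, ← mul_sum, sum_boole, sum_const, card_range, smul_eq_mul, mul_comm]
        simp [long]
    _ ≤ (L + 1) * 2 ^ n := by rw [add_mul, one_mul]; gcongr

lemma sum_range_two_pow_xor {M : Type*} [AddCommMonoid M] {n A : ℕ} (hA : A < 2 ^ n)
    (f : ℕ → M) : ∑ B ∈ range (2 ^ n), f (A ^^^ B) = ∑ X ∈ range (2 ^ n), f X := by
  refine sum_nbij' (A ^^^ ·) (A ^^^ ·) ?_ ?_ ?_ ?_ fun _ _ => rfl <;>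
    simp only [mem_range, ← Nat.xor_assoc, Nat.xor_self, Nat.zero_xor, implies_true]
  all_goals exact fun X hX => Nat.xor_lt_two_pow hA hX

lemma sum_sum_longestDiffRun_le {n L : ℕ} (hL : n * n ≤ 2 ^ L) :
    ∑ A ∈ range (2 ^ n), ∑ B ∈ range (2 ^ n), longestDiffRun n A B
      ≤ (L + 1) * (2 ^ n * 2 ^ n) := by
  calc ∑ A ∈ range (2 ^ n), ∑ B ∈ range (2 ^ n), longestDiffRun n A B
      = ∑ _A ∈ range (2 ^ n), ∑ X ∈ range (2 ^ n), longestRunOfOnes n X :=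
        sum_congr rfl fun A hA => sum_range_two_pow_xor (mem_range.1 hA) (longestRunOfOnes n)
    _ ≤ (L + 1) * (2 ^ n * 2 ^ n) := by
        rw [sum_const, card_range, smul_eq_mul, mul_left_comm]
        gcongr
        exact sum_longestRunOfOnes_le hL

lemma sum_sum_le_of_le_longestDiffRun {n L : ℕ} (hL : n * n ≤ 2 ^ L) {time : ℕ → ℕ → ℕ}
    (htime : ∀ A B, A < 2 ^ n → B < 2 ^ n → time A B ≤ 2 * longestDiffRun n A B + 8) :
    ∑ A ∈ range (2 ^ n), ∑ B ∈ range (2 ^ n), time A B ≤ (2 * L + 10) * (2 ^ n * 2 ^ n) := by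
  calc ∑ A ∈ range (2 ^ n), ∑ B ∈ range (2 ^ n), time A B
      ≤ ∑ A ∈ range (2 ^ n), ∑ B ∈ range (2 ^ n), (2 * longestDiffRun n A B + 8) := by
        gcongr with A hA B hB
        exact htime A B (mem_range.1 hA) (mem_range.1 hB)
    _ = 2 * ∑ A ∈ range (2 ^ n), ∑ B ∈ range (2 ^ n), longestDiffRun n A B
          + 8 * (2 ^ n * 2 ^ n) := by
        simp only [sum_add_distrib, ← mul_sum, sum_const, card_range, smul_eq_mul]
        ring
    _ ≤ 2 * ((L + 1) * (2 ^ n * 2 ^ n)) + 8 * (2 ^ n * 2 ^ n) := by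
        gcongr
        exact sum_sum_longestDiffRun_le hL
    _ = (2 * L + 10) * (2 ^ n * 2 ^ n) := by ring

lemma longestDiffRun_le (n A B : ℕ) : longestDiffRun n A B ≤ n :=
  longestRunOfOnes_le n (A ^^^ B)

lemma average_le_of_le_longestDiffRun {n : ℕ} (hn : 2 ≤ n) {time : ℕ → ℕ → ℕ}
    (htime : ∀ A B, A < 2 ^ n → B < 2 ^ n → time A B ≤ 2 * longestDiffRun n A B + 8) :
    (∑ A ∈ range (2 ^ n), ∑ B ∈ range (2 ^ n), (time A B : ℝ)) / (2 ^ n * 2 ^ n)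
      ≤ 18 * Real.logb 2 n := by
  have hn2 : n < 2 ^ (Nat.log 2 n + 1) := Nat.lt_pow_succ_log_self one_lt_two n
  have hL : n * n ≤ 2 ^ (2 * (Nat.log 2 n + 1)) := by rw [two_mul, pow_add]; gcongr
  have hlogb : (Nat.log 2 n : ℝ) ≤ Real.logb 2 n := by exact_mod_cast Real.natLog_le_logb n 2
  have hone : 1 ≤ Real.logb 2 n :=
    (Real.le_logb_iff_rpow_le one_lt_two (by positivity)).2 (by simpa using hn)
  rw [div_le_iff₀ (by positivity)]
  calc ∑ A ∈ range (2 ^ n), ∑ B ∈ range (2 ^ n), (time A B : ℝ)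
      ≤ ((2 * (2 * (Nat.log 2 n + 1)) + 10 : ℕ) : ℝ) * (2 ^ n * 2 ^ n) := by
        exact_mod_cast sum_sum_le_of_le_longestDiffRun hL htime
    _ ≤ 18 * Real.logb 2 n * (2 ^ n * 2 ^ n) := by
        gcongr
        push_cast
        linarith

/-- If an adder completes on inputs `A, B` within `2k + 8` parallel steps, where `k` is the
length of the longest contiguous run of unequal addend-pairs `(a_i ≠ b_i)`, then its
expected number of parallel steps over uniformly random `n`-bit inputs is `O(log n)`, and
its worst case is `O(n)`. -/
theorem adder_time_bounds :
    ∃ C : ℝ, 0 < C ∧ ∀ n : ℕ, 2 ≤ n → ∀ time : ℕ → ℕ → ℕ,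
      (∀ A B, A < 2 ^ n → B < 2 ^ n → time A B ≤ 2 * longestDiffRun n A B + 8) →
      ((∑ A ∈ Finset.range (2 ^ n), ∑ B ∈ Finset.range (2 ^ n), (time A B : ℝ)) /
          ((2 ^ n) * (2 ^ n)) ≤ C * Real.log n) ∧
      ∀ A B, A < 2 ^ n → B < 2 ^ n → (time A B : ℝ) ≤ C * n := by
  have hlog2 : 0 < Real.log 2 := Real.log_pos one_lt_two
  have hC : 6 ≤ 18 / Real.log 2 := by
    rw [le_div_iff₀ hlog2]
    linarith [Real.log_two_lt_d9]
  refine ⟨18 / Real.log 2, by positivity, fun n hn time htime => ⟨?_, fun A B hA hB => ?_⟩⟩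
  · rw [div_mul_eq_mul_div, mul_div_assoc, ← Real.logb]
    exact average_le_of_le_longestDiffRun hn htime
  · have htAB : time A B ≤ 2 * n + 8 := (htime A B hA hB).trans (by
      have := longestDiffRun_le n A B
      omega)
    have hn' : (2 : ℝ) ≤ n := by exact_mod_cast hn
    have htAB' : (time A B : ℝ) ≤ 2 * n + 8 := by exact_mod_cast htAB
    nlinarith
end
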